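/- arXiv:1401.3146 — 6 statements merged into one kernel-verified Lean document; each statement's English description precedes it below -/
import Mathlib

section
/- Let κ be the 3×4 stochastic matrix with rows (1/2, 0, 0, 1/2), (0, 1/2, 0, 1/2), (0, 0, 1/2, 1/2), and μ the 3×3 stochastic matrix with rows (1/2, 1/2, 0), (1/2, 0, 1/2), (0, 1/2, 1/2). Then there is no row-stochastic 4×3 matrix λ with μ = κλ. -/
/-! Every row of `κex` puts positive weight on its last column, while every column of `μex` has a
zero entry. Hence in `μex = κex * λ` each entry of the last row of a nonnegative `λ` is forced to
vanish, so that row cannot sum to `1`. -/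

def IsStochastic {X Y : Type*} [Fintype Y] (κ : Matrix X Y ℝ) : Prop :=
  (∀ x y, 0 ≤ κ x y) ∧ ∀ x, ∑ y, κ x y = 1

def zonotope {X Y : Type*} [Fintype Y] (κ : Matrix X Y ℝ) : Set (X → ℝ) :=
  {v | ∃ a : Y → ℝ, (∀ y, a y ∈ Set.Icc (0:ℝ) 1) ∧ v = κ.mulVec a}

noncomputable def κex : Matrix (Fin 3) (Fin 4) ℝ :=
  !![1/2, 0, 0, 1/2; 0, 1/2, 0, 1/2; 0, 0, 1/2, 1/2]

noncomputable def μex : Matrix (Fin 3) (Fin 3) ℝ :=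
  !![1/2, 1/2, 0; 1/2, 0, 1/2; 0, 1/2, 1/2]

section

variable {X Y Z : Type*} [Fintype Y]

theorem Matrix.apply_eq_zero_of_mul_apply_eq_zero {κ : Matrix X Y ℝ} {lam : Matrix Y Z ℝ}
    {x : X} {y : Y} {z : Z} (hκ : ∀ y', 0 ≤ κ x y') (hlam : ∀ y', 0 ≤ lam y' z)
    (hpos : 0 < κ x y) (hzero : (κ * lam) x z = 0) : lam y z = 0 := by
  rw [Matrix.mul_apply,
    Finset.sum_eq_zero_iff_of_nonneg fun y' _ => mul_nonneg (hκ y') (hlam y')] at hzero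
  exact (mul_eq_zero.mp (hzero y (Finset.mem_univ y))).resolve_left hpos.ne'

theorem IsStochastic.exists_mul_apply_ne_zero [Fintype Z] {lam : Matrix Y Z ℝ}
    (hlam : IsStochastic lam) (κ : Matrix X Y ℝ) (hκ : ∀ x y, 0 ≤ κ x y) (y : Y) :
    ∃ z, ∀ x, 0 < κ x y → (κ * lam) x z ≠ 0 := by
  obtain ⟨z, -, hz⟩ := Finset.exists_ne_zero_of_sum_ne_zero (s := Finset.univ)
    (f := lam y) (by rw [hlam.2 y]; exact one_ne_zero)
  exact ⟨z, fun x hpos hzero =>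
    hz (Matrix.apply_eq_zero_of_mul_apply_eq_zero (hκ x) (hlam.1 · z) hpos hzero)⟩

end

theorem κex_nonneg (x : Fin 3) (y : Fin 4) : 0 ≤ κex x y := by
  fin_cases x <;> fin_cases y <;> norm_num [κex]

theorem κex_apply_three_pos (x : Fin 3) : 0 < κex x 3 := by
  fin_cases x <;> simp [κex]

theorem μex_exists_apply_eq_zero (z : Fin 3) : ∃ x, μex x z = 0 := by
  fin_cases z
  exacts [⟨2, by simp [μex]⟩, ⟨1, by simp [μex]⟩, ⟨0, by simp [μex]⟩]

theorem no_stochastic_factor :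
    ¬ ∃ lam : Matrix (Fin 4) (Fin 3) ℝ, IsStochastic lam ∧ μex = κex * lam := by
  rintro ⟨lam, hlam, hμ⟩
  obtain ⟨z, hz⟩ := hlam.exists_mul_apply_ne_zero κex κex_nonneg 3
  obtain ⟨x, hx⟩ := μex_exists_apply_eq_zero z
  exact hz x (κex_apply_three_pos x) (hμ ▸ hx)
end

section
/- Let κ be the 3×4 stochastic matrix with rows (1/2, 0, 0, 1/2), (0, 1/2, 0, 1/2), (0, 0, 1/2, 1/2), and μ the 3×3 stochastic matrix with rows (1/2, 1/2, 0), (1/2, 0, 1/2), (0, 1/2, 1/2). Then Z_μ ⊆ Z_κ, i.e., for every a ∈ [0,1]^3 there exists b ∈ [0,1]^4 with μa = κb. -/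
open Set

theorem exists_shift_mem_Icc {ι : Type*} [Finite ι] [Nonempty ι] {s : ι → ℝ}
    (hs : ∀ i, s i ∈ Icc (0 : ℝ) 2) (hdiff : ∀ i j, s i ≤ s j + 1) :
    ∃ t ∈ Icc (0 : ℝ) 1, ∀ i, s i - t ∈ Icc (0 : ℝ) 1 := by
  obtain ⟨k, hk⟩ := Finite.exists_max s
  refine ⟨max 0 (s k - 1), ⟨le_max_left _ _, max_le zero_le_one (by linarith [(hs k).2])⟩,
    fun i => ⟨?_, ?_⟩⟩
  · exact sub_nonneg.2 (max_le (hs i).1 (by linarith [hdiff k i]))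
  · linarith [hk i, le_max_right 0 (s k - 1)]

theorem mem_zonotope_κex_of_shift {v : Fin 3 → ℝ} {t : ℝ} (ht : t ∈ Icc (0 : ℝ) 1)
    (hv : ∀ i, 2 * v i - t ∈ Icc (0 : ℝ) 1) : v ∈ zonotope κex := by
  refine ⟨![2 * v 0 - t, 2 * v 1 - t, 2 * v 2 - t, t], fun y => ?_, ?_⟩
  · fin_cases y
    exacts [hv 0, hv 1, hv 2, ht]
  · funext i
    fin_cases i <;> simp [κex, Matrix.mulVec, dotProduct, Fin.sum_univ_succ] <;> ring

theorem μex_mulVec (a : Fin 3 → ℝ) :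
    μex.mulVec a = (1 / 2 : ℝ) • ![a 0 + a 1, a 0 + a 2, a 1 + a 2] := by
  funext i
  fin_cases i <;> simp [μex, Matrix.mulVec, dotProduct, Fin.sum_univ_succ] <;> ring

theorem zonotope_subset_example : zonotope μex ⊆ zonotope κex := by
  rintro v ⟨a, ha, rfl⟩
  obtain ⟨h0, h0'⟩ := ha 0
  obtain ⟨h1, h1'⟩ := ha 1
  obtain ⟨h2, h2'⟩ := ha 2
  rw [μex_mulVec]
  set s : Fin 3 → ℝ := ![a 0 + a 1, a 0 + a 2, a 1 + a 2] with hs_def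
  have hs : ∀ i, s i ∈ Icc (0 : ℝ) 2 := by
    intro i
    fin_cases i <;>
      simp only [hs_def, Fin.zero_eta, Fin.mk_one, Fin.reduceFinMk, Matrix.cons_val] <;>
      constructor <;> linarith
  have hdiff : ∀ i j, s i ≤ s j + 1 := by
    intro i j
    fin_cases i <;> fin_cases j <;>
      simp only [hs_def, Fin.zero_eta, Fin.mk_one, Fin.reduceFinMk, Matrix.cons_val] <;> linarith
  obtain ⟨t, ht, hst⟩ := exists_shift_mem_Icc hs hdiff
  exact mem_zonotope_κex_of_shift ht fun i => by simpa using hst i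
end

section
/- Together, the previous two facts show that for |X| = 3 the zonotope order is strictly weaker than the majorization order: there exist stochastic matrices κ ∈ K(X;{1,2,3,4}) and μ ∈ K(X;{1,2,3}) with Z_μ ⊆ Z_κ but no stochastic λ with μ = κλ. -/
/-!
Let `κ = ½ [I | 𝟙]`, so `κ a = (aₓ + t) / 2` with `t` the last coordinate of `a`. A vector `v` lies
in `Z_κ` as soon as `v ∈ [0,1]^X` and `vₓ - vₓ' ≤ ½`: take `t = max(0, 2 maxₓ vₓ - 1)`. Any stochastic
`μ` whose rows are at total-variation distance at most `½` maps `[0,1]^Y` into such vectors, so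
`Z_μ ⊆ Z_κ`; this holds for `μ = ½ (J - I)` when `|X| = 3`. On the other hand, `μ = κλ` with `λ`
stochastic is impossible: the zeros on the diagonal of `μ` force the last row of `λ`, which meets
every row of `κ` with weight `½`, to vanish.
-/

open Matrix

variable {X Y : Type*} [Fintype Y]

lemma mulVec_mem_Icc_of_isStochastic {μ : Matrix X Y ℝ} (hμ : IsStochastic μ) {b : Y → ℝ}
    (hb : ∀ y, b y ∈ Set.Icc (0 : ℝ) 1) (x : X) : (μ *ᵥ b) x ∈ Set.Icc (0 : ℝ) 1 := by
  refine ⟨Finset.sum_nonneg fun y _ => mul_nonneg (hμ.1 x y) (hb y).1, ?_⟩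
  calc (μ *ᵥ b) x = ∑ y, μ x y * b y := rfl
    _ ≤ ∑ y, μ x y := Finset.sum_le_sum fun y _ => mul_le_of_le_one_right (hμ.1 x y) (hb y).2
    _ = 1 := hμ.2 x

lemma mulVec_sub_mulVec_le_sum_max (μ : Matrix X Y ℝ) {b : Y → ℝ}
    (hb : ∀ y, b y ∈ Set.Icc (0 : ℝ) 1) (x x' : X) :
    (μ *ᵥ b) x - (μ *ᵥ b) x' ≤ ∑ y, max 0 (μ x y - μ x' y) := by
  calc (μ *ᵥ b) x - (μ *ᵥ b) x' = ∑ y, (μ x y - μ x' y) * b y := by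
        simp only [mulVec, dotProduct, sub_mul, Finset.sum_sub_distrib]
    _ ≤ ∑ y, max 0 (μ x y - μ x' y) := Finset.sum_le_sum fun y _ => by
        obtain ⟨hb0, hb1⟩ := hb y
        rcases le_total 0 (μ x y - μ x' y) with hd | hd
        · rw [max_eq_right hd]; exact mul_le_of_le_one_right hd hb1
        · rw [max_eq_left hd]; exact mul_nonpos_of_nonpos_of_nonneg hd hb0

/-- `μ = κλ` with `κ, λ ≥ 0` and `μ x y = 0` forces `λ z y = 0` whenever `κ x z > 0`. -/
lemma not_exists_isStochastic_mul_eq {Z : Type*} [Fintype Z]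
    {κ : Matrix X Z ℝ} {μ : Matrix X Y ℝ} (hκ : ∀ x z, 0 ≤ κ x z) {z : Z} (hz : ∀ x, 0 < κ x z)
    (hμ : ∀ y, ∃ x, μ x y = 0) : ¬ ∃ lam : Matrix Z Y ℝ, IsStochastic lam ∧ μ = κ * lam := by
  rintro ⟨lam, ⟨hlam, hsum⟩, rfl⟩
  have hrow : ∀ y, lam z y = 0 := fun y => by
    obtain ⟨x, hx⟩ := hμ y
    have hterms := (Finset.sum_eq_zero_iff_of_nonneg fun w _ =>
      mul_nonneg (hκ x w) (hlam w y)).1 hx z (Finset.mem_univ z)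
    exact (mul_eq_zero.1 hterms).resolve_left (hz x).ne'
  simpa [hrow] using hsum z

/-- `½ [I | 𝟙]`; for `n = 3` this is the paper's `κ`. -/
noncomputable def halfIdentityOnes (n : ℕ) : Matrix (Fin n) (Fin (n + 1)) ℝ :=
  Matrix.of fun x y => if y = x.castSucc ∨ y = Fin.last n then 1 / 2 else 0

lemma halfIdentityOnes_apply_last {n : ℕ} (x : Fin n) :
    halfIdentityOnes n x (Fin.last n) = 1 / 2 := by
  simp [halfIdentityOnes]

lemma halfIdentityOnes_apply_castSucc {n : ℕ} (x y : Fin n) :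
    halfIdentityOnes n x y.castSucc = if y = x then 1 / 2 else 0 := by
  simp [halfIdentityOnes, Fin.castSucc_ne_last]

lemma isStochastic_halfIdentityOnes (n : ℕ) : IsStochastic (halfIdentityOnes n) := by
  refine ⟨fun x y => by simp only [halfIdentityOnes, of_apply]; split_ifs <;> norm_num, fun x => ?_⟩
  simp only [Fin.sum_univ_castSucc, halfIdentityOnes_apply_castSucc, halfIdentityOnes_apply_last,
    Finset.sum_ite_eq', Finset.mem_univ, if_true]
  norm_num

lemma halfIdentityOnes_mulVec {n : ℕ} (a : Fin (n + 1) → ℝ) (x : Fin n) :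
    (halfIdentityOnes n *ᵥ a) x = (a x.castSucc + a (Fin.last n)) / 2 := by
  simp only [mulVec, dotProduct, Fin.sum_univ_castSucc, halfIdentityOnes_apply_castSucc,
    halfIdentityOnes_apply_last, ite_mul, zero_mul, Finset.sum_ite_eq', Finset.mem_univ, if_true]
  ring

lemma exists_forall_two_mul_sub_mem_Icc [Finite X] {v : X → ℝ}
    (hv : ∀ x, v x ∈ Set.Icc (0 : ℝ) 1) (hdiff : ∀ x x', v x - v x' ≤ 1 / 2) :
    ∃ t ∈ Set.Icc (0 : ℝ) 1, ∀ x, 2 * v x - t ∈ Set.Icc (0 : ℝ) 1 := by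
  rcases isEmpty_or_nonempty X with hX | hX
  · exact ⟨0, by simp, fun x => isEmptyElim x⟩
  obtain ⟨x₀, hx₀⟩ := Finite.exists_max v
  refine ⟨max 0 (2 * v x₀ - 1), ⟨le_max_left _ _, max_le zero_le_one (by linarith [(hv x₀).2])⟩,
    fun x => ⟨?_, ?_⟩⟩
  · have hgap := hdiff x₀ x
    exact sub_nonneg.2 (max_le (by linarith [(hv x).1]) (by linarith))
  · linarith [hx₀ x, le_max_right 0 (2 * v x₀ - 1)]

lemma mem_zonotope_halfIdentityOnes {n : ℕ} {v : Fin n → ℝ}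
    (hv : ∀ x, v x ∈ Set.Icc (0 : ℝ) 1) (hdiff : ∀ x x', v x - v x' ≤ 1 / 2) :
    v ∈ zonotope (halfIdentityOnes n) := by
  obtain ⟨t, ht, hvt⟩ := exists_forall_two_mul_sub_mem_Icc hv hdiff
  refine ⟨Fin.lastCases t fun x => 2 * v x - t, fun y => ?_, funext fun x => ?_⟩
  · induction y using Fin.lastCases with
    | last => simpa using ht
    | cast x => simpa using hvt x
  · rw [halfIdentityOnes_mulVec]
    simp only [Fin.lastCases_castSucc, Fin.lastCases_last]
    ring

lemma zonotope_subset_zonotope_halfIdentityOnes {n : ℕ} {μ : Matrix (Fin n) Y ℝ}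
    (hμ : IsStochastic μ) (hrows : ∀ x x', ∑ y, max 0 (μ x y - μ x' y) ≤ 1 / 2) :
    zonotope μ ⊆ zonotope (halfIdentityOnes n) := by
  rintro _ ⟨b, hb, rfl⟩
  exact mem_zonotope_halfIdentityOnes (mulVec_mem_Icc_of_isStochastic hμ hb)
    fun x x' => (mulVec_sub_mulVec_le_sum_max μ hb x x').trans (hrows x x')

/-- `½ (J - I)`; for `X = Fin 3` this is the paper's `μ`. -/
noncomputable def halfOffDiagonal (X : Type*) [DecidableEq X] : Matrix X X ℝ :=
  Matrix.of fun x y => if x = y then 0 else 1 / 2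

section halfOffDiagonal

variable [DecidableEq X]

lemma halfOffDiagonal_apply_self (x : X) : halfOffDiagonal X x x = 0 := by
  simp [halfOffDiagonal]

lemma halfOffDiagonal_apply_of_ne {x y : X} (h : x ≠ y) : halfOffDiagonal X x y = 1 / 2 := by
  simp [halfOffDiagonal, h]

lemma halfOffDiagonal_apply_nonneg (x y : X) : 0 ≤ halfOffDiagonal X x y := by
  simp only [halfOffDiagonal, of_apply]; split_ifs <;> norm_num

lemma halfOffDiagonal_apply_le (x y : X) : halfOffDiagonal X x y ≤ 1 / 2 := by
  simp only [halfOffDiagonal, of_apply]; split_ifs <;> norm_num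

lemma isStochastic_halfOffDiagonal [Fintype X] (hX : Fintype.card X = 3) :
    IsStochastic (halfOffDiagonal X) := by
  refine ⟨halfOffDiagonal_apply_nonneg, fun x => ?_⟩
  simp only [halfOffDiagonal, of_apply, Finset.sum_ite, Finset.sum_const_zero, zero_add,
    Finset.sum_const, nsmul_eq_mul, Finset.filter_ne, Finset.card_erase_of_mem (Finset.mem_univ x),
    Finset.card_univ, hX]
  norm_num

/-- Row `x` exceeds row `x'` only in column `x'`, by at most `½`. -/
lemma sum_max_sub_halfOffDiagonal_le [Fintype X] (x x' : X) :
    ∑ y, max 0 (halfOffDiagonal X x y - halfOffDiagonal X x' y) ≤ 1 / 2 := by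
  calc ∑ y, max 0 (halfOffDiagonal X x y - halfOffDiagonal X x' y)
      ≤ ∑ y, if y = x' then (1 / 2 : ℝ) else 0 := Finset.sum_le_sum fun y _ => by
        by_cases hy : y = x'
        · subst hy
          simpa [halfOffDiagonal_apply_self] using halfOffDiagonal_apply_le x y
        · rw [if_neg hy, halfOffDiagonal_apply_of_ne (Ne.symm hy)]
          exact max_le le_rfl (by linarith [halfOffDiagonal_apply_le x y])
    _ = 1 / 2 := by simp

end halfOffDiagonal

theorem zonotope_order_strictly_weaker :
    ∃ (κ : Matrix (Fin 3) (Fin 4) ℝ) (μ : Matrix (Fin 3) (Fin 3) ℝ),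
      IsStochastic κ ∧ IsStochastic μ ∧ zonotope μ ⊆ zonotope κ ∧
      ¬ ∃ lam : Matrix (Fin 4) (Fin 3) ℝ, IsStochastic lam ∧ μ = κ * lam := by
  have hμ : IsStochastic (halfOffDiagonal (Fin 3)) := isStochastic_halfOffDiagonal (by simp)
  refine ⟨halfIdentityOnes 3, halfOffDiagonal (Fin 3), isStochastic_halfIdentityOnes 3, hμ,
    zonotope_subset_zonotope_halfIdentityOnes hμ sum_max_sub_halfOffDiagonal_le, ?_⟩
  exact not_exists_isStochastic_mul_eq (isStochastic_halfIdentityOnes 3).1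
    (fun x => by rw [halfIdentityOnes_apply_last]; norm_num)
    fun y => ⟨y, halfOffDiagonal_apply_self y⟩
end

section
/- Suppose |X| = 2. A set Z ⊆ [0,1]^X equals Z_κ for some row-stochastic matrix κ with domain X if and only if Z is a convex polytope (zonotope) containing 0_X and 1_X that is symmetric under v ↦ 1_X − v. -/
/-- A zonotope: the set of `[0,1]`-combinations of finitely many generating vectors. -/
def IsZonotope {X : Type*} (Z : Set (X → ℝ)) : Prop :=
  ∃ (n : ℕ) (v : Fin n → X → ℝ),
    Z = {w | ∃ a : Fin n → ℝ, (∀ i, a i ∈ Set.Icc (0:ℝ) 1) ∧ w = ∑ i, a i • v i}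

open Matrix Set Finset

variable {X Y : Type*} [Fintype Y]

lemma mulVec_eq_sum_smul_transpose (κ : Matrix X Y ℝ) (a : Y → ℝ) :
    κ *ᵥ a = ∑ y, a y • κᵀ y := by
  simp only [mulVec_eq_sum, op_smul_eq_smul]

lemma zonotope_eq_setOf_sum_smul (κ : Matrix X Y ℝ) :
    zonotope κ = {w | ∃ a : Y → ℝ, (∀ y, a y ∈ Icc (0:ℝ) 1) ∧ w = ∑ y, a y • κᵀ y} := by
  simp only [zonotope, mulVec_eq_sum_smul_transpose]

lemma zonotope_transpose_of (v : Y → X → ℝ) :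
    zonotope (of v)ᵀ = {w | ∃ a : Y → ℝ, (∀ y, a y ∈ Icc (0:ℝ) 1) ∧ w = ∑ y, a y • v y} :=
  zonotope_eq_setOf_sum_smul _

lemma isZonotope_zonotope {n : ℕ} (κ : Matrix X (Fin n) ℝ) : IsZonotope (zonotope κ) :=
  ⟨n, κᵀ, zonotope_eq_setOf_sum_smul κ⟩

lemma zero_mem_zonotope (κ : Matrix X Y ℝ) : 0 ∈ zonotope κ :=
  ⟨0, fun _ => ⟨le_rfl, zero_le_one⟩, (mulVec_zero κ).symm⟩

namespace IsStochastic

variable {κ : Matrix X Y ℝ}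

lemma mulVec_one (hκ : IsStochastic κ) : κ *ᵥ 1 = 1 :=
  funext fun x => by simpa [mulVec_apply_eq_sum] using hκ.2 x

lemma one_mem_zonotope (hκ : IsStochastic κ) : 1 ∈ zonotope κ :=
  ⟨1, fun _ => ⟨zero_le_one, le_rfl⟩, hκ.mulVec_one.symm⟩

lemma one_sub_mem_zonotope (hκ : IsStochastic κ) {v : X → ℝ} (hv : v ∈ zonotope κ) :
    1 - v ∈ zonotope κ := by
  obtain ⟨a, ha, rfl⟩ := hv
  refine ⟨1 - a, fun y => ⟨sub_nonneg.2 (ha y).2, sub_le_self _ (ha y).1⟩, ?_⟩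
  rw [mulVec_sub, hκ.mulVec_one]

lemma apply_mem_Icc_of_mem_zonotope (hκ : IsStochastic κ) {v : X → ℝ} (hv : v ∈ zonotope κ)
    (x : X) : v x ∈ Icc (0:ℝ) 1 := by
  obtain ⟨a, ha, rfl⟩ := hv
  rw [mulVec_apply_eq_sum]
  refine ⟨sum_nonneg fun y _ => mul_nonneg (hκ.1 x y) (ha y).1, ?_⟩
  calc ∑ y, κ x y * a y ≤ ∑ y, κ x y :=
        sum_le_sum fun y _ => mul_le_of_le_one_right (hκ.1 x y) (ha y).2
    _ = 1 := hκ.2 x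

end IsStochastic

lemma isStochastic_of_zonotope_subset_cube {κ : Matrix X Y ℝ}
    (hcube : ∀ v ∈ zonotope κ, ∀ x, v x ∈ Icc (0:ℝ) 1) (hone : 1 ∈ zonotope κ) :
    IsStochastic κ := by
  classical
  have hentry : ∀ x y, κ x y ∈ Icc (0:ℝ) 1 := fun x y => by
    have hsingle : ∀ y', (Pi.single y 1 : Y → ℝ) y' ∈ Icc (0:ℝ) 1 := fun y' => by
      rw [Pi.single_apply]; split_ifs <;> simp
    simpa [mulVec_single_one] using hcube _ ⟨Pi.single y 1, hsingle, rfl⟩ x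
  refine ⟨fun x y => (hentry x y).1, fun x => le_antisymm ?_ ?_⟩
  · simpa [mulVec_apply_eq_sum] using (hcube _ ⟨1, fun _ => ⟨zero_le_one, le_rfl⟩, rfl⟩ x).2
  · obtain ⟨a, ha, h1⟩ := hone
    calc (1:ℝ) = ∑ y, κ x y * a y := by rw [← mulVec_apply_eq_sum, ← h1, Pi.one_apply]
      _ ≤ ∑ y, κ x y := sum_le_sum fun y _ => mul_le_of_le_one_right (hentry x y).1 (ha y).2

theorem binary_zonotope_characterization (Z : Set (Fin 2 → ℝ)) :
    (∃ (n : ℕ) (κ : Matrix (Fin 2) (Fin n) ℝ), IsStochastic κ ∧ Z = zonotope κ) ↔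
      (IsZonotope Z ∧ (∀ v ∈ Z, ∀ x, v x ∈ Set.Icc (0:ℝ) 1) ∧
        (fun _ => (0:ℝ)) ∈ Z ∧ (fun _ => (1:ℝ)) ∈ Z ∧
        ∀ v ∈ Z, (fun x => 1 - v x) ∈ Z) := by
  constructor
  · rintro ⟨n, κ, hκ, rfl⟩
    exact ⟨isZonotope_zonotope κ, fun v hv => hκ.apply_mem_Icc_of_mem_zonotope hv,
      zero_mem_zonotope κ, hκ.one_mem_zonotope, fun v hv => hκ.one_sub_mem_zonotope hv⟩
  · rintro ⟨⟨n, v, rfl⟩, hcube, -, hone, -⟩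
    rw [← zonotope_transpose_of] at hcube hone ⊢
    exact ⟨n, (of v)ᵀ, isStochastic_of_zonotope_subset_cube hcube hone, rfl⟩
end

section
/- For |X| = 2, the zonotope order coincides with the majorization order: for row-stochastic matrices κ ∈ K(X;Y) and μ ∈ K(X;Z), one has Z_μ ⊆ Z_κ if and only if there exists a row-stochastic matrix λ with μ = κλ. -/
/-!
If `μ = κ * λ` with `λ` stochastic, then `λ` maps the unit cube into itself, so `Z_μ ⊆ Z_κ`.

Conversely, if `μ` is not of this form, Hahn–Banach separates `μ` from the compact convex set
`{κ * λ}`. Writing the separating functional as `M ↦ ∑ C x z * M x z` and testing it on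
deterministic `λ` gives `∑_y g(κ_y) < ∑_z ⟨C_z, μ_z⟩ ≤ ∑_z g(μ_z)` for the sublinear function
`g v = max_z (v ᵥ* C) z` of the columns. On the other hand, comparing support functions,
`Z_μ ⊆ Z_κ` gives `∑_z max ⟨w, μ_z⟩ 0 ≤ ∑_y max ⟨w, κ_y⟩ 0` for every `w`. When `|X| = 2`,
`g` restricted to the nonnegative quadrant is a linear function plus a sum of such hinges: after
dehomogenizing, this is the fact that a maximum of finitely many affine functions of one variable
is affine plus a nonnegative combination of hinges `max (t - θ) 0`. The linear parts agree because
both matrices have row sums `1`, so `∑_z g(μ_z) ≤ ∑_y g(κ_y)`, a contradiction.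
-/

open Matrix Finset

section Zonotope

variable {X Y Z : Type*} [Fintype Y] [Fintype Z]

theorem zonotope_mul_subset (κ : Matrix X Y ℝ) {lam : Matrix Y Z ℝ} (hlam : IsStochastic lam) :
    zonotope (κ * lam) ⊆ zonotope κ := by
  rintro _ ⟨a, ha, rfl⟩
  refine ⟨lam *ᵥ a, fun y => ⟨?_, ?_⟩, (mulVec_mulVec a κ lam).symm⟩
  · exact sum_nonneg fun z _ => mul_nonneg (hlam.1 y z) (ha z).1
  · calc (lam *ᵥ a) y ≤ ∑ z, lam y z :=
          sum_le_sum fun z _ => mul_le_of_le_one_right (hlam.1 y z) (ha z).2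
      _ = 1 := hlam.2 y

theorem dotProduct_le_sum_max_zero (u : Y → ℝ) {a : Y → ℝ} (ha : ∀ y, a y ∈ Set.Icc (0:ℝ) 1) :
    u ⬝ᵥ a ≤ ∑ y, max (u y) 0 := by
  refine sum_le_sum fun y _ => ?_
  rcases le_total 0 (u y) with hu | hu
  · exact (mul_le_of_le_one_right hu (ha y).2).trans (le_max_left _ _)
  · exact (mul_nonpos_of_nonpos_of_nonneg hu (ha y).1).trans (le_max_right _ _)

theorem isGreatest_dotProduct_zonotope [Fintype X] (κ : Matrix X Y ℝ) (w : X → ℝ) :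
    IsGreatest ((w ⬝ᵥ ·) '' zonotope κ) (∑ y, max ((w ᵥ* κ) y) 0) := by
  classical
  refine ⟨⟨κ *ᵥ fun y => if 0 < (w ᵥ* κ) y then 1 else 0, ⟨_, fun y => ?_, rfl⟩, ?_⟩, ?_⟩
  · split_ifs <;> simp
  · simp only [dotProduct_mulVec]
    refine sum_congr rfl fun y _ => ?_
    dsimp only
    split_ifs with h
    · simp [h.le]
    · simp [not_lt.1 h]
  · rintro _ ⟨_, ⟨a, ha, rfl⟩, rfl⟩
    simp only [dotProduct_mulVec]
    exact dotProduct_le_sum_max_zero _ ha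

theorem sum_max_vecMul_le_of_zonotope_subset [Fintype X] {κ : Matrix X Y ℝ} {μ : Matrix X Z ℝ}
    (h : zonotope μ ⊆ zonotope κ) (w : X → ℝ) :
    ∑ z, max ((w ᵥ* μ) z) 0 ≤ ∑ y, max ((w ᵥ* κ) y) 0 :=
  (isGreatest_dotProduct_zonotope μ w).isLUB.mono (isGreatest_dotProduct_zonotope κ w).isLUB
    (Set.image_mono h)

end Zonotope

section Separation

variable {X Y Z : Type*}

theorem IsStochastic.nonempty [Fintype Y] {κ : Matrix X Y ℝ} (hκ : IsStochastic κ)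
    (x : X) : Nonempty Y := by
  by_contra hY
  rw [not_nonempty_iff] at hY
  simpa using hκ.2 x

theorem convex_setOf_isStochastic [Fintype Z] :
    Convex ℝ {lam : Matrix Y Z ℝ | IsStochastic lam} := by
  intro l hl l' hl' a b ha hb hab
  refine ⟨fun y z => ?_, fun y => ?_⟩
  · simp only [Matrix.add_apply, Matrix.smul_apply, smul_eq_mul]
    exact add_nonneg (mul_nonneg ha (hl.1 y z)) (mul_nonneg hb (hl'.1 y z))
  · simp only [Matrix.add_apply, Matrix.smul_apply, smul_eq_mul, sum_add_distrib, ← mul_sum,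
      hl.2 y, hl'.2 y, hab, mul_one]

theorem isCompact_setOf_isStochastic [Fintype Z] :
    IsCompact {lam : Matrix Y Z ℝ | IsStochastic lam} := by
  have hclosed : IsClosed {lam : Matrix Y Z ℝ | IsStochastic lam} := by
    simp only [IsStochastic, Set.ofPred_and, Set.ofPred_forall]
    refine .inter (isClosed_iInter fun y => isClosed_iInter fun z => ?_)
      (isClosed_iInter fun y => ?_)
    · exact isClosed_le continuous_const (by fun_prop)
    · exact isClosed_eq (by fun_prop) continuous_const
  refine (isCompact_univ_pi fun _ => isCompact_univ_pi fun _ =>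
    isCompact_Icc (a := (0 : ℝ)) (b := 1)).of_isClosed_subset hclosed
    fun lam hlam y _ z _ => ⟨hlam.1 y z, ?_⟩
  calc lam y z ≤ ∑ z', lam y z' := single_le_sum (fun z' _ => hlam.1 y z') (mem_univ z)
    _ = 1 := hlam.2 y

theorem isStochastic_of_pi_single [Fintype Z] [DecidableEq Z] (σ : Y → Z) :
    IsStochastic (Matrix.of fun y => Pi.single (σ y) (1 : ℝ)) := by
  refine ⟨fun y z => ?_, fun y => by simp⟩
  by_cases h : z = σ y <;> simp [h]

theorem apply_eq_sum_single_mul {R : Type*} [CommSemiring R] [Fintype X] [Fintype Z]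
    [DecidableEq X] [DecidableEq Z] (f : Matrix X Z R →ₗ[R] R) (M : Matrix X Z R) :
    f M = ∑ x, ∑ z, f (Matrix.single x z 1) * M x z := by
  conv_lhs => rw [matrix_eq_sum_single M]
  simp only [map_sum, mul_comm (f _)]
  refine sum_congr rfl fun x _ => sum_congr rfl fun z _ => ?_
  rw [← smul_eq_mul, ← map_smul, smul_single, smul_eq_mul, mul_one]

theorem exists_separating_matrix [Fintype X] [Fintype Y] [Fintype Z]
    {κ : Matrix X Y ℝ} {μ : Matrix X Z ℝ} (h : ¬∃ lam, IsStochastic lam ∧ μ = κ * lam) :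
    ∃ C : Matrix X Z ℝ, ∀ lam : Matrix Y Z ℝ, IsStochastic lam →
      ∑ x, ∑ z, C x z * (κ * lam) x z < ∑ x, ∑ z, C x z * μ x z := by
  classical
  have : LocallyConvexSpace ℝ (Matrix X Z ℝ) := inferInstanceAs (LocallyConvexSpace ℝ (X → Z → ℝ))
  set S := (κ * ·) '' {lam : Matrix Y Z ℝ | IsStochastic lam}
  have hconv : Convex ℝ S := convex_setOf_isStochastic.linear_image (mulLeftLinearMap Z ℝ κ)
  have hclosed : IsClosed S :=
    (isCompact_setOf_isStochastic.image (continuous_const.matrix_mul continuous_id)).isClosed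
  have hμ : μ ∉ S := fun ⟨lam, hlam, hμ⟩ => h ⟨lam, hlam, hμ.symm⟩
  obtain ⟨f, u, hfS, hfμ⟩ := geometric_hahn_banach_closed_point hconv hclosed hμ
  refine ⟨fun x z => f (Matrix.single x z 1), fun lam hlam => ?_⟩
  have key := (hfS _ ⟨lam, hlam, rfl⟩).trans hfμ
  rwa [← f.coe_coe, apply_eq_sum_single_mul, apply_eq_sum_single_mul] at key

theorem exists_sum_sup'_vecMul_lt [Fintype X] [Fintype Y] [Fintype Z] [Nonempty Z]
    {κ : Matrix X Y ℝ} {μ : Matrix X Z ℝ} (h : ¬∃ lam, IsStochastic lam ∧ μ = κ * lam) :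
    ∃ C : Matrix X Z ℝ, ∑ y, univ.sup' univ_nonempty (κᵀ y ᵥ* C) < ∑ z, (μᵀ z ᵥ* C) z := by
  classical
  obtain ⟨C, hC⟩ := exists_separating_matrix h
  choose σ hσ using fun y => (exists_mem_eq_sup' univ_nonempty (κᵀ y ᵥ* C)).imp fun _ h => h.2
  refine ⟨C, ?_⟩
  have := hC _ (isStochastic_of_pi_single σ)
  convert this using 1
  · simp only [hσ, vecMul, dotProduct, mul_apply, of_apply, transpose_apply, mul_sum]
    rw [sum_comm]
    refine sum_congr rfl fun y _ => ?_
    rw [sum_comm]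
    refine sum_congr rfl fun x _ => ?_
    simp [Pi.single_apply, mul_comm]
  · simp only [vecMul, dotProduct, transpose_apply]
    rw [sum_comm]
    simp only [mul_comm]

end Separation

def IsHingeSum (A : ℝ) (f : ℝ → ℝ) : Prop :=
  ∃ (B : ℝ) (n : ℕ) (p θ : Fin n → ℝ), (∀ i, 0 ≤ p i) ∧
    ∀ t, f t = A * t + B + ∑ i, p i * max (t - θ i) 0

theorem max_sub_sub_max_sub_of_le {τ t : ℝ} (h : τ ≤ t) (θ : ℝ) :
    max (t - θ) 0 - max (τ - θ) 0 = max (t - max θ τ) 0 := by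
  rcases le_total θ τ with hθ | hθ
  · rw [max_eq_right hθ, max_eq_left (by linarith), max_eq_left (by linarith),
      max_eq_left (by linarith)]
    ring
  · rw [max_eq_left hθ, max_eq_right (by linarith : τ - θ ≤ 0)]
    ring

namespace IsHingeSum

variable {A : ℝ} {f : ℝ → ℝ}

theorem affine (A B : ℝ) : IsHingeSum A fun t => A * t + B :=
  ⟨B, 0, Fin.elim0, Fin.elim0, fun i => i.elim0, by simp⟩

theorem add_affine (hf : IsHingeSum A f) (a b : ℝ) :
    IsHingeSum (A + a) fun t => f t + (a * t + b) := by
  obtain ⟨B, n, p, θ, hp, hf⟩ := hf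
  exact ⟨B + b, n, p, θ, hp, fun t => by simp only [hf]; ring⟩

theorem continuous (hf : IsHingeSum A f) : Continuous f := by
  obtain ⟨B, n, p, θ, -, hf⟩ := hf
  rw [funext hf]
  fun_prop

theorem monotone (hf : IsHingeSum A f) (hA : 0 ≤ A) : Monotone f := by
  obtain ⟨B, n, p, θ, hp, hf⟩ := hf
  intro s t hst
  rw [hf, hf]
  gcongr with i
  exact hp i

/-- The hinges of `max f 0`: one at `τ` of weight `A`, and those of `f` moved to `max θ τ`. -/
theorem max_zero_of_eq_zero (hf : IsHingeSum A f) (hA : 0 ≤ A) {τ : ℝ} (hτ : f τ = 0) :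
    IsHingeSum 0 fun t => max (f t) 0 := by
  have hmono := hf.monotone hA
  obtain ⟨B, n, p, θ, hp, hf⟩ := hf
  refine ⟨0, n + 1, Fin.cons A p, Fin.cons τ fun i => max (θ i) τ,
    Fin.cons hA hp, fun t => ?_⟩
  simp only [Fin.sum_univ_succ, Fin.cons_zero, Fin.cons_succ, zero_mul, zero_add]
  rcases le_total t τ with htτ | hτt
  · have hθ : ∀ i, max (t - max (θ i) τ) 0 = 0 := fun i =>
      max_eq_right (by linarith [le_max_right (θ i) τ])
    rw [max_eq_right ((hmono htτ).trans hτ.le), max_eq_right (by linarith : t - τ ≤ 0)]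
    simp [hθ]
  · have hdiff : f t = f t - f τ := by rw [hτ, sub_zero]
    rw [max_eq_left (hτ ▸ hmono hτt), max_eq_left (by linarith : 0 ≤ t - τ), hdiff, hf, hf]
    simp only [← max_sub_sub_max_sub_of_le hτt, mul_sub, sum_sub_distrib]
    ring

theorem max_zero (hf : IsHingeSum A f) (hA : 0 ≤ A) :
    IsHingeSum 0 (fun t => max (f t) 0) ∨ IsHingeSum A (fun t => max (f t) 0) := by
  by_cases hpos : ∀ t, 0 ≤ f t
  · exact .inr (by simpa [max_eq_left (hpos _)] using hf)
  by_cases hneg : ∀ t, f t ≤ 0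
  · exact .inl (by simpa [max_eq_right (hneg _)] using affine 0 0)
  push Not at hpos hneg
  obtain ⟨t₀, ht₀⟩ := hpos
  obtain ⟨t₁, ht₁⟩ := hneg
  have ht : t₀ ≤ t₁ := le_of_not_gt fun h => (hf.monotone hA h.le).not_gt (ht₀.trans ht₁)
  obtain ⟨τ, -, hτ⟩ := intermediate_value_Icc ht hf.continuous.continuousOn ⟨ht₀.le, ht₁.le⟩
  exact .inl (hf.max_zero_of_eq_zero hA hτ)

/-- `max ℓ f = ℓ + max (f - ℓ) 0`, and `f - ℓ` is monotone because `ℓ` has the smaller slope. -/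
theorem max_affine (hf : IsHingeSum A f) {a : ℝ} (ha : a ≤ A) (b : ℝ) :
    IsHingeSum a (fun t => max (a * t + b) (f t)) ∨
      IsHingeSum A (fun t => max (a * t + b) (f t)) := by
  have key : ∀ t, max (a * t + b) (f t) = max (f t + (-a * t + -b)) 0 + (a * t + b) :=
    fun t => by rw [max_comm, ← max_add_add_right]; congr 1 <;> ring
  simp only [key]
  rcases (hf.add_affine (-a) (-b)).max_zero (by linarith) with h | h
  · exact .inl (by simpa using h.add_affine a b)
  · exact .inr (by simpa using h.add_affine a b)

end IsHingeSum

theorem exists_isHingeSum_sup' {ι : Type*} (s : Finset ι) (hs : s.Nonempty) (a b : ι → ℝ) :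
    ∃ i ∈ s, IsHingeSum (a i) fun t => s.sup' hs fun j => a j * t + b j := by
  classical
  induction s using Finset.induction_on_min_value a with
  | empty => exact absurd hs (by simp)
  | insert i s hi hmin ih =>
    rcases s.eq_empty_or_nonempty with rfl | hs'
    · exact ⟨i, mem_singleton_self i, by simpa using IsHingeSum.affine (a i) (b i)⟩
    obtain ⟨j, hj, hf⟩ := ih hs'
    simp only [sup'_insert hs']
    rcases hf.max_affine (hmin j hj) (b i) with h | h
    · exact ⟨i, mem_insert_self i s, h⟩
    · exact ⟨j, mem_insert_of_mem hj, h⟩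

theorem exists_sup'_vecMul_eq_dotProduct_add_sum_max {Z : Type*} [Fintype Z] [Nonempty Z]
    (C : Matrix (Fin 2) Z ℝ) :
    ∃ (c : Fin 2 → ℝ) (n : ℕ) (w : Fin n → Fin 2 → ℝ), ∀ v : Fin 2 → ℝ, 0 ≤ v →
      univ.sup' univ_nonempty (v ᵥ* C) = c ⬝ᵥ v + ∑ i, max (w i ⬝ᵥ v) 0 := by
  obtain ⟨z, -, B, n, p, θ, hp, hrepr⟩ :=
    exists_isHingeSum_sup' univ univ_nonempty (fun z => C 0 z - C 1 z) (C 1)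
  refine ⟨![C 0 z - C 1 z + B, B], n, fun i => p i • ![1 - θ i, -θ i], fun v hv => ?_⟩
  -- dehomogenize: `v = s • (t, 1 - t)`
  set s := v 0 + v 1
  set t := v 0 / s
  have hv₀ : 0 ≤ v 0 := hv 0
  have hv₁ : 0 ≤ v 1 := hv 1
  have hs : 0 ≤ s := add_nonneg hv₀ hv₁
  have hv0 : v 0 = s * t := (mul_div_cancel_of_imp' fun h => by linarith).symm
  have hv1 : v 1 = s - s * t := by rw [← hv0]; ring
  have hcol : ∀ z', (v ᵥ* C) z' = s * ((C 0 z' - C 1 z') * t + C 1 z') := fun z' => by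
    simp only [vecMul, dotProduct, Fin.sum_univ_two]
    rw [hv1, hv0]; ring
  have hhinge : ∀ i, max ((p i • ![1 - θ i, -θ i]) ⬝ᵥ v) 0 = s * (p i * max (t - θ i) 0) :=
    fun i => by
      rw [← mul_assoc, mul_max_of_nonneg _ _ (mul_nonneg hs (hp i)), mul_zero]
      congr 1
      simp only [dotProduct, Fin.sum_univ_two, Pi.smul_apply, smul_eq_mul, Matrix.cons_val_zero,
        Matrix.cons_val_one]
      rw [hv1, hv0]; ring
  calc univ.sup' univ_nonempty (v ᵥ* C)
      = s * univ.sup' univ_nonempty fun z' => (C 0 z' - C 1 z') * t + C 1 z' := by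
        rw [mul₀_sup' hs]; exact sup'_congr _ rfl fun z' _ => hcol z'
    _ = ![C 0 z - C 1 z + B, B] ⬝ᵥ v + ∑ i, max ((p i • ![1 - θ i, -θ i]) ⬝ᵥ v) 0 := by
        simp only [hhinge, hrepr, ← mul_sum]
        simp only [dotProduct, Fin.sum_univ_two, Matrix.cons_val_zero, Matrix.cons_val_one]
        rw [hv1, hv0]; ring

theorem sum_le_sum_of_eq_dotProduct_add_sum_max {X Y Z : Type*} [Fintype X] [Fintype Y] [Fintype Z]
    {κ : Matrix X Y ℝ} {μ : Matrix X Z ℝ} (hκ : ∀ x y, 0 ≤ κ x y) (hμ : ∀ x z, 0 ≤ μ x z)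
    (hrows : μ *ᵥ 1 = κ *ᵥ 1)
    (hhinge : ∀ w, ∑ z, max ((w ᵥ* μ) z) 0 ≤ ∑ y, max ((w ᵥ* κ) y) 0)
    {g : (X → ℝ) → ℝ} {c : X → ℝ} {n : ℕ} {w : Fin n → X → ℝ}
    (hg : ∀ v, 0 ≤ v → g v = c ⬝ᵥ v + ∑ i, max (w i ⬝ᵥ v) 0) :
    ∑ z, g (μᵀ z) ≤ ∑ y, g (κᵀ y) := by
  have hlin : ∑ z, c ⬝ᵥ μᵀ z = ∑ y, c ⬝ᵥ κᵀ y := by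
    have h := congrArg (c ⬝ᵥ ·) hrows
    simp only [dotProduct_mulVec, dotProduct_one] at h
    exact h
  rw [sum_congr rfl fun z _ => hg (μᵀ z) fun x => hμ x z,
    sum_congr rfl fun y _ => hg (κᵀ y) fun x => hκ x y, sum_add_distrib, sum_add_distrib, hlin,
    sum_comm, sum_comm (s := univ (α := Y))]
  gcongr with i
  exact hhinge (w i)

theorem binary_zonotope_order_eq_majorization {Y Z : Type*} [Fintype Y] [Fintype Z]
    (κ : Matrix (Fin 2) Y ℝ) (μ : Matrix (Fin 2) Z ℝ)
    (hκ : IsStochastic κ) (hμ : IsStochastic μ) :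
    zonotope μ ⊆ zonotope κ ↔ ∃ lam : Matrix Y Z ℝ, IsStochastic lam ∧ μ = κ * lam := by
  refine ⟨fun hsub => ?_, fun ⟨lam, hlam, hμκ⟩ => hμκ ▸ zonotope_mul_subset κ hlam⟩
  have : Nonempty Z := hμ.nonempty 0
  by_contra hno
  obtain ⟨C, hC⟩ := exists_sum_sup'_vecMul_lt hno
  obtain ⟨c, n, w, hg⟩ := exists_sup'_vecMul_eq_dotProduct_add_sum_max C
  have hrows : μ *ᵥ 1 = κ *ᵥ 1 := funext fun x => by
    simp only [mulVec, dotProduct, Pi.one_apply, mul_one, hμ.2, hκ.2]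
  have hsup := sum_le_sum_of_eq_dotProduct_add_sum_max hκ.1 hμ.1 hrows
    (sum_max_vecMul_le_of_zonotope_subset hsub) hg
  have hle : ∑ z, (μᵀ z ᵥ* C) z ≤ ∑ z, univ.sup' univ_nonempty (μᵀ z ᵥ* C) :=
    sum_le_sum fun z _ => le_sup' (μᵀ z ᵥ* C) (mem_univ z)
  linarith
end

section
/- If X has more than 2 elements, then the majorization preorder on stochastic matrices with domain X does not admit greatest lower bounds in general: there exist κ₁, κ₂ ∈ K(X) such that no μ ∈ K(X) is a greatest common lower bound of κ₁ and κ₂ with respect to the majorization preorder. -/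
/-- Majorization (Blackwell/degradation) order: \`μ\` can be obtained from \`κ\`
by post-composing with a stochastic matrix. -/
def Maj {X Y Z : Type*} [Fintype Y] [Fintype Z]
    (κ : Matrix X Y ℝ) (μ : Matrix X Z ℝ) : Prop :=
  ∃ lam : Matrix Y Z ℝ, IsStochastic lam ∧ μ = κ * lam

/-!
Take `X = Fin 3` first. A common lower bound of `κ₁` and `κ₂` has its columns in the intersection
of the cones spanned by the columns of `κ₁` and of `κ₂`, a cone over a hexagon whose facet normals
are the rows of `F₁ = 3 κ₁⁻¹` and `F₂ = 3 κ₂⁻¹`. A greatest lower bound `μ` would dominate `ν₁`,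
whose first column lies on the extreme ray of that cone through `(4, 4, 1)`; as the ray is extreme,
`μ` must have a column on it. But `μ` would also dominate `ν₂`, whose columns lie on facets that all miss
`(4, 4, 1)`, so that column of `μ` has nowhere to go. A retraction `X → Fin 3` transports the
counterexample to any `X` with more than two elements.
-/

open Matrix Function

section General

variable {I X Y Z W : Type*}

theorem IsStochastic.submatrix [Fintype Y] {κ : Matrix X Y ℝ} (hκ : IsStochastic κ)
    (r : Z → X) : IsStochastic (κ.submatrix r id) :=
  ⟨fun x => hκ.1 (r x), fun x => hκ.2 (r x)⟩

theorem IsStochastic.exists_pos [Fintype Y] {κ : Matrix X Y ℝ} (hκ : IsStochastic κ) (x : X) :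
    ∃ y, 0 < κ x y := by
  obtain ⟨y, -, hy⟩ := Finset.exists_lt_of_sum_lt (s := .univ) (f := 0) (g := κ x)
    (by simp [hκ.2 x])
  exact ⟨y, hy⟩

theorem Maj.submatrix [Fintype Y] [Fintype Z] {κ : Matrix X Y ℝ} {μ : Matrix X Z ℝ}
    (h : Maj κ μ) (r : W → X) : Maj (κ.submatrix r id) (μ.submatrix r id) := by
  obtain ⟨l, hl, rfl⟩ := h
  exact ⟨l, hl, by rw [submatrix_mul _ _ _ _ _ bijective_id, submatrix_id_id]⟩

theorem Maj.mul_nonneg [Fintype X] [Fintype Y] [Fintype Z] {κ : Matrix X Y ℝ}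
    {μ : Matrix X Z ℝ} {F : Matrix I X ℝ} (hF : ∀ i y, 0 ≤ (F * κ) i y) (h : Maj κ μ) (i : I)
    (z : Z) : 0 ≤ (F * μ) i z := by
  obtain ⟨l, hl, rfl⟩ := h
  rw [← Matrix.mul_assoc, mul_apply]
  exact Finset.sum_nonneg fun y _ => _root_.mul_nonneg (hF i y) (hl.1 y z)

theorem exists_pos_pos_of_mul_apply_pos [Fintype Y] {μ : Matrix X Y ℝ} {l : Matrix Y Z ℝ}
    {x : X} {z : Z} (hμ : ∀ y, 0 ≤ μ x y) (h : 0 < (μ * l) x z) : ∃ y, 0 < μ x y ∧ 0 < l y z := by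
  obtain ⟨y, -, hy⟩ := Finset.exists_lt_of_sum_lt (f := 0) (g := fun y => μ x y * l y z)
    (by simpa [mul_apply] using h)
  have hl : 0 < l y z := pos_of_mul_pos_right hy (hμ y)
  exact ⟨y, pos_of_mul_pos_left hy hl.le, hl⟩

theorem mul_apply_eq_zero_of_mul_mul_apply_eq_zero [Fintype X] [Fintype Z] {F : Matrix I X ℝ}
    {μ : Matrix X Z ℝ} {l : Matrix Z W ℝ} {i : I} {w : W} (hF : ∀ z, 0 ≤ (F * μ) i z)
    (hl : ∀ z, 0 ≤ l z w) (h : (F * (μ * l)) i w = 0) {z : Z} (hz : 0 < l z w) :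
    (F * μ) i z = 0 := by
  rw [← Matrix.mul_assoc, mul_apply] at h
  have hterm := (Finset.sum_eq_zero_iff_of_nonneg fun z _ => _root_.mul_nonneg (hF z) (hl z)).1 h
    z (Finset.mem_univ z)
  exact (mul_eq_zero.1 hterm).resolve_right hz.ne'

def IsGreatestCommonLowerBound {n₁ n₂ m : ℕ} (κ₁ : Matrix X (Fin n₁) ℝ)
    (κ₂ : Matrix X (Fin n₂) ℝ) (μ : Matrix X (Fin m) ℝ) : Prop :=
  IsStochastic μ ∧ Maj κ₁ μ ∧ Maj κ₂ μ ∧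
    ∀ (m' : ℕ) (μ' : Matrix X (Fin m') ℝ), IsStochastic μ' → Maj κ₁ μ' → Maj κ₂ μ' → Maj μ μ'

theorem IsGreatestCommonLowerBound.submatrix {n₁ n₂ m : ℕ} {κ₁ : Matrix Y (Fin n₁) ℝ}
    {κ₂ : Matrix Y (Fin n₂) ℝ} {μ : Matrix X (Fin m) ℝ} {g : X → Y} {f : Y → X}
    (hgf : LeftInverse g f)
    (hμ : IsGreatestCommonLowerBound (κ₁.submatrix g id) (κ₂.submatrix g id) μ) :
    IsGreatestCommonLowerBound κ₁ κ₂ (μ.submatrix f id) := by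
  have retract : ∀ {n : ℕ} (κ : Matrix Y (Fin n) ℝ), (κ.submatrix g id).submatrix f id = κ :=
    fun κ => by rw [submatrix_submatrix, hgf.comp_eq_id, comp_id, submatrix_id_id]
  obtain ⟨hst, h₁, h₂, hgreatest⟩ := hμ
  refine ⟨hst.submatrix f, retract κ₁ ▸ h₁.submatrix f, retract κ₂ ▸ h₂.submatrix f,
    fun m' μ' hst' h₁' h₂' => ?_⟩
  simpa only [retract] using
    (hgreatest m' _ (hst'.submatrix g) (h₁'.submatrix g) (h₂'.submatrix g)).submatrix f

end General

namespace CyclicCounterexample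

noncomputable def κ₁ : Matrix (Fin 3) (Fin 3) ℝ := !![1/3, 2/3, 0; 0, 1/3, 2/3; 2/3, 0, 1/3]

noncomputable def κ₂ : Matrix (Fin 3) (Fin 3) ℝ := !![2/3, 1/3, 0; 0, 2/3, 1/3; 1/3, 0, 2/3]

/-- `F₁ = 3 κ₁⁻¹`. -/
def F₁ : Matrix (Fin 3) (Fin 3) ℝ := !![1, -2, 4; 4, 1, -2; -2, 4, 1]

/-- `F₂ = 3 κ₂⁻¹`. -/
def F₂ : Matrix (Fin 3) (Fin 3) ℝ := !![4, -2, 1; 1, 4, -2; -2, 1, 4]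

noncomputable def ν₁ : Matrix (Fin 3) (Fin 2) ℝ := !![2/9, 7/9; 2/9, 7/9; 1/18, 17/18]

noncomputable def ν₂ : Matrix (Fin 3) (Fin 3) ℝ := !![2/9, 2/9, 5/9; 5/9, 2/9, 2/9; 2/9, 5/9, 2/9]

theorem isStochastic_κ₁ : IsStochastic κ₁ := by
  norm_num [IsStochastic, Fin.forall_fin_succ, Fin.sum_univ_succ, κ₁]

theorem isStochastic_κ₂ : IsStochastic κ₂ := by
  norm_num [IsStochastic, Fin.forall_fin_succ, Fin.sum_univ_succ, κ₂]

theorem isStochastic_ν₁ : IsStochastic ν₁ := by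
  norm_num [IsStochastic, Fin.forall_fin_succ, Fin.sum_univ_succ, ν₁]

theorem isStochastic_ν₂ : IsStochastic ν₂ := by
  norm_num [IsStochastic, Fin.forall_fin_succ, Fin.sum_univ_succ, ν₂]

theorem maj_κ₁_ν₁ : Maj κ₁ ν₁ :=
  ⟨!![0, 1; 1/3, 2/3; 1/6, 5/6],
    by norm_num [IsStochastic, Fin.forall_fin_succ, Fin.sum_univ_succ],
    by ext i j; fin_cases i <;> fin_cases j <;>
      norm_num [ν₁, κ₁, mul_apply, Fin.sum_univ_succ]⟩

theorem maj_κ₂_ν₁ : Maj κ₂ ν₁ :=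
  ⟨!![1/6, 5/6; 1/3, 2/3; 0, 1],
    by norm_num [IsStochastic, Fin.forall_fin_succ, Fin.sum_univ_succ],
    by ext i j; fin_cases i <;> fin_cases j <;>
      norm_num [ν₁, κ₂, mul_apply, Fin.sum_univ_succ]⟩

theorem maj_κ₁_ν₂ : Maj κ₁ ν₂ :=
  ⟨!![0, 2/3, 1/3; 1/3, 0, 2/3; 2/3, 1/3, 0],
    by norm_num [IsStochastic, Fin.forall_fin_succ, Fin.sum_univ_succ],
    by ext i j; fin_cases i <;> fin_cases j <;>
      norm_num [ν₂, κ₁, mul_apply, Fin.sum_univ_succ]⟩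

theorem maj_κ₂_ν₂ : Maj κ₂ ν₂ :=
  ⟨!![0, 1/3, 2/3; 2/3, 0, 1/3; 1/3, 2/3, 0],
    by norm_num [IsStochastic, Fin.forall_fin_succ, Fin.sum_univ_succ],
    by ext i j; fin_cases i <;> fin_cases j <;>
      norm_num [ν₂, κ₂, mul_apply, Fin.sum_univ_succ]⟩

theorem F₁_mul_κ₁_nonneg : ∀ i j, 0 ≤ (F₁ * κ₁) i j := by
  norm_num [F₁, κ₁, Fin.forall_fin_succ, mul_apply, Fin.sum_univ_succ]

theorem F₂_mul_κ₂_nonneg : ∀ i j, 0 ≤ (F₂ * κ₂) i j := by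
  norm_num [F₂, κ₂, Fin.forall_fin_succ, mul_apply, Fin.sum_univ_succ]

/-- The first column of `ν₁` spans the ray through `(4, 4, 1)`, cut out by the facets with normals
`F₁ 0` and `F₂ 2`. -/
theorem exists_column_on_ray {m : ℕ} {μ : Matrix (Fin 3) (Fin m) ℝ} (hμ : IsStochastic μ)
    (h₁ : Maj κ₁ μ) (h₂ : Maj κ₂ μ) (h : Maj μ ν₁) :
    ∃ z, μ 0 z = 4 * μ 2 z ∧ μ 1 z = 4 * μ 2 z ∧ 0 < μ 2 z := by
  obtain ⟨l, hl, hν⟩ := h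
  obtain ⟨z, hμz, hlz⟩ := exists_pos_pos_of_mul_apply_pos (l := l) (z := 0) (hμ.1 2)
    (by rw [← hν]; simp [ν₁])
  have hface₁ := mul_apply_eq_zero_of_mul_mul_apply_eq_zero (h₁.mul_nonneg F₁_mul_κ₁_nonneg 0)
    (fun y => hl.1 y 0)
    (by rw [← hν]; simp [F₁, ν₁, mul_apply, Fin.sum_univ_succ]; norm_num) hlz
  have hface₂ := mul_apply_eq_zero_of_mul_mul_apply_eq_zero (h₂.mul_nonneg F₂_mul_κ₂_nonneg 2)
    (fun y => hl.1 y 0)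
    (by rw [← hν]; simp [F₂, ν₁, mul_apply, Fin.sum_univ_succ]; norm_num) hlz
  simp [F₁, F₂, mul_apply, Fin.sum_univ_succ] at hface₁ hface₂
  exact ⟨z, by linarith, by linarith, hμz⟩

/-- The columns of `ν₂` lie on the facets with normals `F₂ 0`, `F₁ 1`, `F₁ 2`, which are all
positive on `(4, 4, 1)`. -/
theorem not_maj_ν₂_of_column_on_ray {m : ℕ} {μ : Matrix (Fin 3) (Fin m) ℝ} (h₁ : Maj κ₁ μ)
    (h₂ : Maj κ₂ μ) {z : Fin m} (hz : μ 0 z = 4 * μ 2 z ∧ μ 1 z = 4 * μ 2 z ∧ 0 < μ 2 z) :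
    ¬ Maj μ ν₂ := by
  rintro ⟨l, hl, hν⟩
  obtain ⟨k, hk⟩ := hl.exists_pos z
  obtain ⟨hz₀, hz₁, hz₂⟩ := hz
  match k, hk with
  | 0, hk =>
    have hface := mul_apply_eq_zero_of_mul_mul_apply_eq_zero (h₂.mul_nonneg F₂_mul_κ₂_nonneg 0)
      (fun y => hl.1 y 0)
      (by rw [← hν]; simp [F₂, ν₂, mul_apply, Fin.sum_univ_succ]; norm_num) hk
    simp [F₂, mul_apply, Fin.sum_univ_succ] at hface
    linarith
  | 1, hk =>
    have hface := mul_apply_eq_zero_of_mul_mul_apply_eq_zero (h₁.mul_nonneg F₁_mul_κ₁_nonneg 1)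
      (fun y => hl.1 y 1)
      (by rw [← hν]; simp [F₁, ν₂, mul_apply, Fin.sum_univ_succ]; norm_num) hk
    simp [F₁, mul_apply, Fin.sum_univ_succ] at hface
    linarith
  | 2, hk =>
    have hface := mul_apply_eq_zero_of_mul_mul_apply_eq_zero (h₁.mul_nonneg F₁_mul_κ₁_nonneg 2)
      (fun y => hl.1 y 2)
      (by rw [← hν]; simp [F₁, ν₂, mul_apply, Fin.sum_univ_succ]; norm_num) hk
    simp [F₁, mul_apply, Fin.sum_univ_succ] at hface
    linarith

theorem not_isGreatestCommonLowerBound {m : ℕ} (μ : Matrix (Fin 3) (Fin m) ℝ) :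
    ¬ IsGreatestCommonLowerBound κ₁ κ₂ μ := by
  rintro ⟨hμ, h₁, h₂, hgreatest⟩
  obtain ⟨z, hz⟩ :=
    exists_column_on_ray hμ h₁ h₂ (hgreatest 2 ν₁ isStochastic_ν₁ maj_κ₁_ν₁ maj_κ₂_ν₁)
  exact not_maj_ν₂_of_column_on_ray h₁ h₂ hz
    (hgreatest 3 ν₂ isStochastic_ν₂ maj_κ₁_ν₂ maj_κ₂_ν₂)

end CyclicCounterexample

theorem no_greatest_lower_bound {X : Type*} [Fintype X] (hX : 2 < Fintype.card X) :
    ∃ (n₁ n₂ : ℕ) (κ₁ : Matrix X (Fin n₁) ℝ) (κ₂ : Matrix X (Fin n₂) ℝ),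
      IsStochastic κ₁ ∧ IsStochastic κ₂ ∧
      ¬ ∃ (m : ℕ) (μ : Matrix X (Fin m) ℝ),
          IsStochastic μ ∧ Maj κ₁ μ ∧ Maj κ₂ μ ∧
          ∀ (m' : ℕ) (μ' : Matrix X (Fin m') ℝ),
            IsStochastic μ' → Maj κ₁ μ' → Maj κ₂ μ' → Maj μ μ' := by
  obtain ⟨f⟩ : Nonempty (Fin 3 ↪ X) :=
    Embedding.nonempty_of_card_le (by rw [Fintype.card_fin]; exact hX)
  let g : X → Fin 3 := invFun f
  refine ⟨3, 3, CyclicCounterexample.κ₁.submatrix g id, CyclicCounterexample.κ₂.submatrix g id,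
    CyclicCounterexample.isStochastic_κ₁.submatrix g,
    CyclicCounterexample.isStochastic_κ₂.submatrix g, ?_⟩
  rintro ⟨m, μ, hμ⟩
  exact CyclicCounterexample.not_isGreatestCommonLowerBound _
    (IsGreatestCommonLowerBound.submatrix (leftInverse_invFun f.injective) hμ)
end
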